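/- arXiv:2109.14246 — 3 statements merged into one kernel-verified Lean document; each statement's English description precedes it below -/
import Mathlib

section
/- Let a = A e^{iα}, b = B e^{iβ} with A, B > 0 real and A² − B² = 1, and let s = [[Re(a+b), Im(a+b)], [−Im(a−b), Re(a−b)]]. Then the set of θ ∈ [0, 2π) for which ‖s·v(θ)‖ > 1 (where v(θ) = (cos θ, sin θ)ᵗ) has Lebesgue measure strictly greater than π/2. In fact {θ : cos(α+β−2θ) > −B/A} has measure greater than π. -/
open MeasureTheory Real

private lemma scat_norm_eq (a b : ℂ) (A B α β θ : ℝ)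
    (ha : a = A * Complex.exp (α * Complex.I))
    (hb : b = B * Complex.exp (β * Complex.I)) :
    ‖(WithLp.equiv 2 (Fin 2 → ℝ)).symm
          ((!![(a + b).re, (a + b).im; -(a - b).im, (a - b).re] :
            Matrix (Fin 2) (Fin 2) ℝ).mulVec ![Real.cos θ, Real.sin θ])‖
    = Real.sqrt (((A*cos α + B*cos β)*cos θ + (A*sin α + B*sin β)*sin θ)^2
      + (-(A*sin α - B*sin β)*cos θ + (A*cos α - B*cos β)*sin θ)^2) := by
  have hre1 : (a+b).re = A*cos α + B*cos β := by
    simp [ha, hb, Complex.exp_mul_I, Complex.add_re, Complex.mul_re,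
      Complex.cos_ofReal_re, Complex.sin_ofReal_re]
  have him1 : (a+b).im = A*sin α + B*sin β := by
    simp [ha, hb, Complex.exp_mul_I, Complex.add_im, Complex.mul_im,
      Complex.cos_ofReal_re, Complex.sin_ofReal_re]
  have hre2 : (a-b).re = A*cos α - B*cos β := by
    simp [ha, hb, Complex.exp_mul_I, Complex.sub_re, Complex.mul_re,
      Complex.cos_ofReal_re, Complex.sin_ofReal_re]
  have him2 : (a-b).im = A*sin α - B*sin β := by
    simp [ha, hb, Complex.exp_mul_I, Complex.sub_im, Complex.mul_im,
      Complex.cos_ofReal_re, Complex.sin_ofReal_re]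
  rw [EuclideanSpace.norm_eq]
  congr 1
  simp [Fin.sum_univ_two, Matrix.mulVec, dotProduct, hre1, him1, hre2, him2]
  ring

private lemma scat_iff (A B α β θ : ℝ) (hA : 0 < A) (hB : 0 < B) (hW : A ^ 2 - B ^ 2 = 1) :
    (1 < Real.sqrt (((A*cos α + B*cos β)*cos θ + (A*sin α + B*sin β)*sin θ)^2
      + (-(A*sin α - B*sin β)*cos θ + (A*cos α - B*cos β)*sin θ)^2))
      ↔ -B/A < cos (α + β - 2*θ) := by
  have hα := sin_sq_add_cos_sq α
  have hβ := sin_sq_add_cos_sq β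
  have hθ := sin_sq_add_cos_sq θ
  have hE : cos (α + β - 2*θ) = (cos α * cos β - sin α * sin β) * (cos θ^2 - sin θ^2)
      + (sin α * cos β + cos α * sin β) * (2 * sin θ * cos θ) := by
    rw [cos_sub, cos_add, sin_add, cos_two_mul, sin_two_mul]
    linear_combination (cos α * cos β - sin α * sin β) * hθ
  have key : ((A*cos α + B*cos β)*cos θ + (A*sin α + B*sin β)*sin θ)^2
      + (-(A*sin α - B*sin β)*cos θ + (A*cos α - B*cos β)*sin θ)^2
      = A^2 + B^2 + 2*A*B*cos (α + β - 2*θ) := by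
    rw [hE]
    linear_combination (A^2*(sin α^2 + cos α^2) + B^2*(sin β^2 + cos β^2)) * hθ + A^2*hα + B^2*hβ
  rw [key, show (1:ℝ) < Real.sqrt (A^2+B^2+2*A*B*cos (α+β-2*θ)) ↔ (1:ℝ)^2 < A^2+B^2+2*A*B*cos (α+β-2*θ) from Real.lt_sqrt (by norm_num), div_lt_iff₀ hA]
  constructor <;> intro h <;> nlinarith

private lemma scat_measure_part (c s' : ℝ) (hc0 : 0 < c) (hc1 : c < 1) :
    ENNReal.ofReal π <
      volume {θ ∈ Set.Ico (0:ℝ) (2*π) | -c < Real.cos (s' - 2*θ)} := by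
  have hπ := Real.pi_pos
  set d := Real.arccos (-c) with hd
  have hcos : Real.cos d = -c := Real.cos_arccos (by linarith) (by linarith)
  have hd2 : π/2 < d := by
    rw [hd, Real.arccos, Real.arcsin_neg]
    have := Real.arcsin_pos.mpr hc0
    linarith
  have hdπ : d < π := by
    rw [hd, Real.arccos, Real.arcsin_neg]
    have := Real.arcsin_lt_pi_div_two.mpr hc1
    linarith
  set x := (s' - d)/2 with hx
  set k := ⌊x/π⌋ with hk
  set t0 := x - k*π with ht0def
  have ht0 : 0 ≤ t0 := by
    have h1 : ((k:ℝ)) * π ≤ x := by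
      rw [← le_div_iff₀ hπ]; exact_mod_cast Int.floor_le (x/π)
    rw [ht0def]; linarith
  have ht0' : t0 < π := by
    have h1 : x < ((k:ℝ) + 1) * π := by
      rw [← div_lt_iff₀ hπ]; exact_mod_cast Int.lt_floor_add_one (x/π)
    rw [ht0def]; linarith
  have hsub : ∀ (m : ℤ) (θ : ℝ), t0 + m*π < θ → θ < t0 + m*π + d →
      -c < Real.cos (s' - 2*θ) := by
    intro m θ h1 h2
    have heq : s' - 2*θ = (d - 2*(θ - t0 - m*π)) + ((k - m : ℤ) : ℝ) * (2*π) := by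
      rw [ht0def, hx]; push_cast; ring
    rw [heq, Real.cos_add_int_mul_two_pi]
    set u := θ - t0 - (m:ℝ)*π with hu
    have hu1 : 0 < u := by rw [hu]; linarith
    have hu2 : u < d := by rw [hu]; linarith
    have habs : |d - 2*u| < d := by rw [abs_lt]; constructor <;> linarith
    calc -c = Real.cos d := hcos.symm
      _ < Real.cos |d - 2*u| :=
          Real.cos_lt_cos_of_nonneg_of_le_pi (abs_nonneg _) hdπ.le habs
      _ = Real.cos (d - 2*u) := Real.cos_abs _
  set S := {θ ∈ Set.Ico (0:ℝ) (2*π) | -c < Real.cos (s' - 2*θ)} with hS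
  have hmem : ∀ θ, θ ∈ Set.Ico (0:ℝ) (2*π) → -c < Real.cos (s' - 2*θ) → θ ∈ S := by
    intro θ h1 h2; exact ⟨h1, h2⟩
  rcases le_or_gt (t0 + d) π with hcase | hcase
  · have hsub1 : Set.Ioo t0 (t0+d) ⊆ S := by
      intro θ hθ
      refine hmem θ ⟨by linarith [hθ.1], by linarith [hθ.2]⟩ ?_
      exact hsub 0 θ (by push_cast; linarith [hθ.1]) (by push_cast; linarith [hθ.2])
    have hsub2 : Set.Ioo (t0+π) (t0+π+d) ⊆ S := by
      intro θ hθ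
      refine hmem θ ⟨by linarith [hθ.1], by linarith [hθ.2]⟩ ?_
      exact hsub 1 θ (by push_cast; linarith [hθ.1]) (by push_cast; linarith [hθ.2])
    have hdisj : Disjoint (Set.Ioo t0 (t0+d)) (Set.Ioo (t0+π) (t0+π+d)) := by
      apply Set.disjoint_left.mpr
      intro θ h1 h2
      linarith [h1.2, h2.1]
    have hle : volume (Set.Ioo t0 (t0+d) ∪ Set.Ioo (t0+π) (t0+π+d)) ≤ volume S :=
      measure_mono (Set.union_subset hsub1 hsub2)
    rw [measure_union hdisj measurableSet_Ioo, Real.volume_Ioo, Real.volume_Ioo] at hle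
    calc ENNReal.ofReal π < ENNReal.ofReal (d + d) := by
          rw [ENNReal.ofReal_lt_ofReal_iff (by linarith)]; linarith
      _ = ENNReal.ofReal (t0+d-t0) + ENNReal.ofReal (t0+π+d-(t0+π)) := by
          rw [← ENNReal.ofReal_add (by linarith) (by linarith)]; ring_nf
      _ ≤ volume S := hle
  · have hA : Set.Ico 0 (t0+d-π) ⊆ S := by
      intro θ hθ
      refine hmem θ ⟨hθ.1, by linarith [hθ.2]⟩ ?_
      exact hsub (-1) θ (by push_cast; linarith [hθ.1]) (by push_cast; linarith [hθ.2])
    have hB : Set.Ioo t0 (t0+d) ⊆ S := by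
      intro θ hθ
      refine hmem θ ⟨by linarith [hθ.1], by linarith [hθ.2]⟩ ?_
      exact hsub 0 θ (by push_cast; linarith [hθ.1]) (by push_cast; linarith [hθ.2])
    have hC : Set.Ioo (t0+π) (2*π) ⊆ S := by
      intro θ hθ
      refine hmem θ ⟨by linarith [hθ.1], hθ.2⟩ ?_
      exact hsub 1 θ (by push_cast; linarith [hθ.1]) (by push_cast; linarith [hθ.2])
    have hdisjBC : Disjoint (Set.Ioo t0 (t0+d)) (Set.Ioo (t0+π) (2*π)) := by
      apply Set.disjoint_left.mpr; intro θ h1 h2; linarith [h1.2, h2.1]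
    have hdisjA : Disjoint (Set.Ico 0 (t0+d-π)) (Set.Ioo t0 (t0+d) ∪ Set.Ioo (t0+π) (2*π)) := by
      apply Set.disjoint_left.mpr
      intro θ h1 h2
      rcases h2 with h2 | h2 <;> linarith [h1.2, h2.1]
    have hle : volume (Set.Ico 0 (t0+d-π) ∪ (Set.Ioo t0 (t0+d) ∪ Set.Ioo (t0+π) (2*π)))
        ≤ volume S :=
      measure_mono (Set.union_subset hA (Set.union_subset hB hC))
    rw [measure_union hdisjA (MeasurableSet.union measurableSet_Ioo measurableSet_Ioo),
      measure_union hdisjBC measurableSet_Ioo,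
      Real.volume_Ico, Real.volume_Ioo, Real.volume_Ioo] at hle
    calc ENNReal.ofReal π
        < ENNReal.ofReal (t0+d-π-0) + (ENNReal.ofReal (t0+d-t0) + ENNReal.ofReal (2*π-(t0+π))) := by
          rw [← ENNReal.ofReal_add (by linarith) (by linarith),
            ← ENNReal.ofReal_add (by linarith) (by linarith),
            ENNReal.ofReal_lt_ofReal_iff (by linarith)]
          linarith
      _ ≤ volume S := hle

/-- The set of directions expanded by the scattering matrix `s` has Lebesgue
measure `> π/2`; in fact `{θ : cos(α+β−2θ) > −B/A}` has measure `> π`. -/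
theorem scattering_matrix_expanding_directions_measure
    (a b : ℂ) (A B α β : ℝ) (hA : 0 < A) (hB : 0 < B)
    (ha : a = A * Complex.exp (α * Complex.I))
    (hb : b = B * Complex.exp (β * Complex.I))
    (hW : A ^ 2 - B ^ 2 = 1) :
    ENNReal.ofReal (π / 2) <
      volume {θ ∈ Set.Ico (0 : ℝ) (2 * π) |
        1 < ‖(WithLp.equiv 2 (Fin 2 → ℝ)).symm
          ((!![(a + b).re, (a + b).im; -(a - b).im, (a - b).re] :
            Matrix (Fin 2) (Fin 2) ℝ).mulVec ![Real.cos θ, Real.sin θ])‖}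
    ∧ ENNReal.ofReal π <
      volume {θ ∈ Set.Ico (0 : ℝ) (2 * π) |
        -B / A < Real.cos (α + β - 2 * θ)} := by
  have hπ := Real.pi_pos
  have hc0 : 0 < B / A := div_pos hB hA
  have hc1 : B / A < 1 := by
    rw [div_lt_one hA]
    nlinarith
  have hmeas := scat_measure_part (B/A) (α+β) hc0 hc1
  have hset : {θ ∈ Set.Ico (0 : ℝ) (2 * π) |
        1 < ‖(WithLp.equiv 2 (Fin 2 → ℝ)).symm
          ((!![(a + b).re, (a + b).im; -(a - b).im, (a - b).re] :
            Matrix (Fin 2) (Fin 2) ℝ).mulVec ![Real.cos θ, Real.sin θ])‖}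
      = {θ ∈ Set.Ico (0 : ℝ) (2 * π) | -B / A < Real.cos (α + β - 2 * θ)} := by
    ext θ
    simp only [Set.mem_setOf_eq]
    constructor
    · rintro ⟨h1, h2⟩
      refine ⟨h1, ?_⟩
      rw [scat_norm_eq a b A B α β θ ha hb, scat_iff A B α β θ hA hB hW] at h2
      rw [neg_div] at h2 ⊢
      exact h2
    · rintro ⟨h1, h2⟩
      refine ⟨h1, ?_⟩
      rw [scat_norm_eq a b A B α β θ ha hb, scat_iff A B α β θ hA hB hW]
      rw [neg_div] at h2 ⊢
      exact h2
  have hmeas' : ENNReal.ofReal π <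
      volume {θ ∈ Set.Ico (0 : ℝ) (2 * π) | -B / A < Real.cos (α + β - 2 * θ)} := by
    convert hmeas using 3 with θ
    rw [neg_div]
  refine ⟨?_, hmeas'⟩
  rw [hset]
  exact lt_trans (by rw [ENNReal.ofReal_lt_ofReal_iff hπ]; linarith) hmeas'
end

section
/- Let g ∈ SL₂(ℝ) be diagonalizable over ℝ with distinct eigenvalues of modulus ≠ 1, with eigendirections v̄₁, v̄₂ ∈ P(ℝ²), and let s ∈ SL₂(ℝ) satisfy s·v̄ᵢ ∉ {v̄₁, v̄₂} for i = 1, 2. Then for every v̄ ∈ P(ℝ²), the orbit of v̄ under the group generated by g and s is infinite. -/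
/-!
Since `det g = 1`, the eigenvalues satisfy `lam₂ = lam₁⁻¹`, so their ratio `lam₁ ^ 2` is not a
root of unity. Writing `w = a • v₁ + b • v₂`, we get `gⁿ w = lam₁ⁿ a • v₁ + lam₂ⁿ b • v₂`, and
when `a ≠ 0 ≠ b` these vectors are pairwise non-proportional, so the orbit of `[w]` is infinite.
If `v` is not an eigenvector of `g` this applies to `w = v`; otherwise `v` is proportional to some
`vᵢ`, and the hypothesis on `s` says precisely that `w = s vᵢ` has `a ≠ 0 ≠ b`.
-/

open Function Matrix Module

namespace Matrix

variable {ι K : Type*} [Fintype ι] [DecidableEq ι] [Field K]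

theorem pow_mulVec_of_mulVec_eq_smul {A : Matrix ι ι K} {μ : K} {v : ι → K}
    (h : A *ᵥ v = μ • v) (n : ℕ) : (A ^ n) *ᵥ v = μ ^ n • v := by
  induction n with
  | zero => simp
  | succ n ih => rw [pow_succ, ← mulVec_mulVec, h, mulVec_smul, ih, smul_smul, pow_succ']

theorem linearIndependent_pair_of_mulVec_eq_smul {A : Matrix ι ι K} {μ₁ μ₂ : K}
    {v₁ v₂ : ι → K} (hμ : μ₁ ≠ μ₂) (hv₁ : v₁ ≠ 0) (hv₂ : v₂ ≠ 0)
    (h₁ : A *ᵥ v₁ = μ₁ • v₁) (h₂ : A *ᵥ v₂ = μ₂ • v₂) : LinearIndependent K ![v₁, v₂] :=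
  End.eigenvectors_linearIndependent' (toLin' A) ![μ₁, μ₂] (injective_pair_iff_ne.2 hμ) _ <|
    Fin.forall_fin_two.2
      ⟨⟨End.mem_eigenspace_iff.2 h₁, hv₁⟩, ⟨End.mem_eigenspace_iff.2 h₂, hv₂⟩⟩

theorem det_eq_prod_of_linearIndependent_eigenvectors {A : Matrix ι ι K} {μ : ι → K}
    {b : ι → ι → K} (hb : LinearIndependent K b) (h : ∀ i, A *ᵥ b i = μ i • b i) :
    A.det = ∏ i, μ i := by
  let B := basisOfLinearIndependentOfCardEqFinrank' b hb (finrank_pi K).symm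
  have hB : ⇑B = b := coe_basisOfLinearIndependentOfCardEqFinrank' b hb _
  have hdiag : LinearMap.toMatrix B B (toLin' A) = diagonal μ := by
    ext i j
    rw [LinearMap.toMatrix_apply, toLin'_apply, hB, h, ← hB, map_smul, B.repr_self,
      diagonal_apply]
    rcases eq_or_ne i j with rfl | hij <;> simp [*]
  rw [← det_diagonal, ← hdiag, LinearMap.det_toMatrix, LinearMap.det_toLin']

end Matrix

section Pair

variable {K V : Type*} [Field K] [AddCommGroup V] [Module K V] {v₁ v₂ : V}

theorem LinearIndependent.exists_smul_add_smul_of_not_parallel [FiniteDimensional K V]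
    (hli : LinearIndependent K ![v₁, v₂]) (hV : finrank K V = 2) {w : V}
    (h₁ : ¬∃ c : K, w = c • v₁) (h₂ : ¬∃ c : K, w = c • v₂) :
    ∃ a b : K, a ≠ 0 ∧ b ≠ 0 ∧ w = a • v₁ + b • v₂ := by
  have hspan := hli.span_eq_top_of_card_eq_finrank' (by simp [hV])
  rw [range_cons_cons_empty] at hspan
  obtain ⟨a, b, rfl⟩ := Submodule.mem_span_pair.1 (hspan ▸ Submodule.mem_top : w ∈ _)
  refine ⟨a, b, ?_, ?_, rfl⟩
  · rintro rfl
    exact h₂ ⟨b, by simp⟩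
  · rintro rfl
    exact h₁ ⟨a, by simp⟩

theorem LinearIndependent.div_pow_eq_of_smul_eq (hli : LinearIndependent K ![v₁, v₂])
    {a b μ₁ μ₂ c : K} (ha : a ≠ 0) (hb : b ≠ 0) (hμ₂ : μ₂ ≠ 0) {m n : ℕ}
    (h : c • ((μ₁ ^ m * a) • v₁ + (μ₂ ^ m * b) • v₂) = (μ₁ ^ n * a) • v₁ + (μ₂ ^ n * b) • v₂) :
    (μ₁ / μ₂) ^ m = (μ₁ / μ₂) ^ n := by
  rw [smul_add, smul_smul, smul_smul] at h
  obtain ⟨h₁, h₂⟩ := hli.eq_of_pair h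
  have e₁ : c * μ₁ ^ m = μ₁ ^ n := mul_right_cancel₀ ha (by rw [← h₁]; ring)
  have e₂ : c * μ₂ ^ m = μ₂ ^ n := mul_right_cancel₀ hb (by rw [← h₂]; ring)
  rw [div_pow, div_pow, div_eq_div_iff (pow_ne_zero _ hμ₂) (pow_ne_zero _ hμ₂), ← e₁, ← e₂]
  ring

end Pair

theorem injective_pow_of_abs_ne_one {K : Type*} [Field K] [LinearOrder K] [IsStrictOrderedRing K]
    {x : K} (hx₀ : x ≠ 0) (hx : |x| ≠ 1) : Injective fun n : ℕ => x ^ n := fun m n h =>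
  pow_right_injective₀ (abs_pos.2 hx₀) hx (by simpa only [abs_pow] using congrArg abs h)

namespace Matrix

variable {ι K : Type*} [Fintype ι] [DecidableEq ι] [Field K]

def projectiveOrbit (H : Subgroup (Matrix ι ι K)ˣ) (v : ι → K) :
    Set (Projectivization K (ι → K)) :=
  {p | ∃ M ∈ H, ∃ h : (M : Matrix ι ι K) *ᵥ v ≠ 0,
    p = Projectivization.mk K ((M : Matrix ι ι K) *ᵥ v) h}

variable {H : Subgroup (Matrix ι ι K)ˣ}

theorem projectiveOrbit_mulVec_subset {M : (Matrix ι ι K)ˣ} (hM : M ∈ H) (v : ι → K) :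
    projectiveOrbit H ((M : Matrix ι ι K) *ᵥ v) ⊆ projectiveOrbit H v := by
  rintro p ⟨N, hN, h, rfl⟩
  rw [mulVec_mulVec] at h
  exact ⟨N * M, H.mul_mem hN hM, h, by simp only [Units.val_mul, mulVec_mulVec]⟩

theorem projectiveOrbit_subset_smul {c : K} (hc : c ≠ 0) (v : ι → K) :
    projectiveOrbit H v ⊆ projectiveOrbit H (c • v) := by
  rintro p ⟨M, hM, h, rfl⟩
  have h' : (M : Matrix ι ι K) *ᵥ (c • v) ≠ 0 := by rwa [mulVec_smul, smul_ne_zero_iff_right hc]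
  refine ⟨M, hM, h', (Projectivization.mk_eq_mk_iff' K _ _ h h').2 ⟨c⁻¹, ?_⟩⟩
  rw [mulVec_smul, smul_smul, inv_mul_cancel₀ hc, one_smul]

theorem infinite_projectiveOrbit_smul_add_smul {g : (Matrix ι ι K)ˣ} (hg : g ∈ H)
    {μ₁ μ₂ : K} {v₁ v₂ : ι → K} (hli : LinearIndependent K ![v₁, v₂])
    (h₁ : (g : Matrix ι ι K) *ᵥ v₁ = μ₁ • v₁) (h₂ : (g : Matrix ι ι K) *ᵥ v₂ = μ₂ • v₂)
    (hμ₂ : μ₂ ≠ 0) (hμ : Injective fun n : ℕ => (μ₁ / μ₂) ^ n) {a b : K} (ha : a ≠ 0)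
    (hb : b ≠ 0) : (projectiveOrbit H (a • v₁ + b • v₂)).Infinite := by
  have hval (n : ℕ) : ((g ^ n : (Matrix ι ι K)ˣ) : Matrix ι ι K) *ᵥ (a • v₁ + b • v₂) =
      (μ₁ ^ n * a) • v₁ + (μ₂ ^ n * b) • v₂ := by
    rw [Units.val_pow_eq_pow_val, mulVec_add, mulVec_smul, mulVec_smul,
      pow_mulVec_of_mulVec_eq_smul h₁, pow_mulVec_of_mulVec_eq_smul h₂, smul_smul, smul_smul,
      mul_comm a, mul_comm b]
  have hne (n : ℕ) : ((g ^ n : (Matrix ι ι K)ˣ) : Matrix ι ι K) *ᵥ (a • v₁ + b • v₂) ≠ 0 := by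
    rw [hval]
    intro h0
    exact mul_ne_zero (pow_ne_zero n hμ₂) hb (hli.eq_zero_of_pair h0).2
  refine Set.infinite_of_injective_forall_mem (f := fun n => Projectivization.mk K _ (hne n))
    (fun m n hmn => hμ ?_) fun n => ⟨g ^ n, H.pow_mem hg n, hne n, rfl⟩
  obtain ⟨c, hc⟩ := (Projectivization.mk_eq_mk_iff' K _ _ _ _).1 hmn
  rw [hval, hval] at hc
  exact (hli.div_pow_eq_of_smul_eq ha hb hμ₂ hc).symm

end Matrix

theorem projective_orbit_infinite_of_hyperbolic_and_scattering_general
    (g s : (Matrix (Fin 2) (Fin 2) ℝ)ˣ)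
    (hgdet : (g : Matrix (Fin 2) (Fin 2) ℝ).det = 1)
    (lam₁ lam₂ : ℝ) (hne : lam₁ ≠ lam₂) (h₁ : |lam₁| ≠ 1)
    (v₁ v₂ : Fin 2 → ℝ) (hv₁ : v₁ ≠ 0) (hv₂ : v₂ ≠ 0)
    (heig₁ : (g : Matrix (Fin 2) (Fin 2) ℝ).mulVec v₁ = lam₁ • v₁)
    (heig₂ : (g : Matrix (Fin 2) (Fin 2) ℝ).mulVec v₂ = lam₂ • v₂)
    (hs₁₁ : ¬ ∃ c : ℝ, (s : Matrix (Fin 2) (Fin 2) ℝ).mulVec v₁ = c • v₁)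
    (hs₁₂ : ¬ ∃ c : ℝ, (s : Matrix (Fin 2) (Fin 2) ℝ).mulVec v₁ = c • v₂)
    (hs₂₁ : ¬ ∃ c : ℝ, (s : Matrix (Fin 2) (Fin 2) ℝ).mulVec v₂ = c • v₁)
    (hs₂₂ : ¬ ∃ c : ℝ, (s : Matrix (Fin 2) (Fin 2) ℝ).mulVec v₂ = c • v₂) :
    ∀ v : Fin 2 → ℝ, v ≠ 0 →
      Set.Infinite {p : Projectivization ℝ (Fin 2 → ℝ) |
        ∃ M ∈ Subgroup.closure ({g, s} : Set (Matrix (Fin 2) (Fin 2) ℝ)ˣ),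
          ∃ h : ((M : Matrix (Fin 2) (Fin 2) ℝ)).mulVec v ≠ 0,
            p = Projectivization.mk ℝ (((M : Matrix (Fin 2) (Fin 2) ℝ)).mulVec v) h} := by
  intro v hv
  set H := Subgroup.closure ({g, s} : Set (Matrix (Fin 2) (Fin 2) ℝ)ˣ)
  have hli := linearIndependent_pair_of_mulVec_eq_smul hne hv₁ hv₂ heig₁ heig₂
  have hdet : lam₁ * lam₂ = 1 := Eq.symm <| by
    simpa [hgdet] using det_eq_prod_of_linearIndependent_eigenvectors (μ := ![lam₁, lam₂]) hli
      (Fin.forall_fin_two.2 ⟨heig₁, heig₂⟩)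
  have hlam₁ : lam₁ ≠ 0 := left_ne_zero_of_mul_eq_one hdet
  have hratio : Injective fun n : ℕ => (lam₁ / lam₂) ^ n := by
    rw [eq_inv_of_mul_eq_one_right hdet, div_inv_eq_mul, ← sq]
    exact injective_pow_of_abs_ne_one (pow_ne_zero 2 hlam₁) fun h => h₁ <| by
      rwa [abs_pow, pow_eq_one_iff_of_nonneg (abs_nonneg _) two_ne_zero] at h
  have infinite_of_not_parallel (w : Fin 2 → ℝ) (hw₁ : ¬∃ c : ℝ, w = c • v₁)
      (hw₂ : ¬∃ c : ℝ, w = c • v₂) : (projectiveOrbit H w).Infinite := by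
    obtain ⟨a, b, ha, hb, rfl⟩ :=
      hli.exists_smul_add_smul_of_not_parallel (finrank_fin_fun ℝ) hw₁ hw₂
    exact infinite_projectiveOrbit_smul_add_smul (Subgroup.subset_closure (by simp)) hli
      heig₁ heig₂ (right_ne_zero_of_mul_eq_one hdet) hratio ha hb
  have infinite_of_eq_smul (u : Fin 2 → ℝ)
      (hu₁ : ¬∃ c : ℝ, (s : Matrix (Fin 2) (Fin 2) ℝ) *ᵥ u = c • v₁)
      (hu₂ : ¬∃ c : ℝ, (s : Matrix (Fin 2) (Fin 2) ℝ) *ᵥ u = c • v₂) {c : ℝ} (hc : v = c • u) :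
      (projectiveOrbit H v).Infinite := by
    have hc₀ : c ≠ 0 := by rintro rfl; exact hv (by simpa using hc)
    exact hc ▸ ((infinite_of_not_parallel _ hu₁ hu₂).mono (projectiveOrbit_mulVec_subset
      (Subgroup.subset_closure (by simp)) u)).mono (projectiveOrbit_subset_smul hc₀ u)
  by_cases hp₁ : ∃ c : ℝ, v = c • v₁
  · obtain ⟨c, hc⟩ := hp₁
    exact infinite_of_eq_smul v₁ hs₁₁ hs₁₂ hc
  by_cases hp₂ : ∃ c : ℝ, v = c • v₂
  · obtain ⟨c, hc⟩ := hp₂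
    exact infinite_of_eq_smul v₂ hs₂₁ hs₂₂ hc
  exact infinite_of_not_parallel v hp₁ hp₂

/-- If `g ∈ SL₂(ℝ)` is ℝ-diagonalizable with distinct eigenvalues of modulus `≠ 1`
and `s ∈ SL₂(ℝ)` maps neither eigendirection into the set of eigendirections,
then every orbit on the projective line under the group generated by `g` and `s`
is infinite. -/
theorem projective_orbit_infinite_of_hyperbolic_and_scattering
    (g s : (Matrix (Fin 2) (Fin 2) ℝ)ˣ)
    (hgdet : (g : Matrix (Fin 2) (Fin 2) ℝ).det = 1)
    (hsdet : (s : Matrix (Fin 2) (Fin 2) ℝ).det = 1)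
    (lam₁ lam₂ : ℝ) (hne : lam₁ ≠ lam₂) (h₁ : |lam₁| ≠ 1) (h₂ : |lam₂| ≠ 1)
    (v₁ v₂ : Fin 2 → ℝ) (hv₁ : v₁ ≠ 0) (hv₂ : v₂ ≠ 0)
    (heig₁ : (g : Matrix (Fin 2) (Fin 2) ℝ).mulVec v₁ = lam₁ • v₁)
    (heig₂ : (g : Matrix (Fin 2) (Fin 2) ℝ).mulVec v₂ = lam₂ • v₂)
    (hs₁₁ : ¬ ∃ c : ℝ, (s : Matrix (Fin 2) (Fin 2) ℝ).mulVec v₁ = c • v₁)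
    (hs₁₂ : ¬ ∃ c : ℝ, (s : Matrix (Fin 2) (Fin 2) ℝ).mulVec v₁ = c • v₂)
    (hs₂₁ : ¬ ∃ c : ℝ, (s : Matrix (Fin 2) (Fin 2) ℝ).mulVec v₂ = c • v₁)
    (hs₂₂ : ¬ ∃ c : ℝ, (s : Matrix (Fin 2) (Fin 2) ℝ).mulVec v₂ = c • v₂) :
    ∀ v : Fin 2 → ℝ, v ≠ 0 →
      Set.Infinite {p : Projectivization ℝ (Fin 2 → ℝ) |
        ∃ M ∈ Subgroup.closure ({g, s} : Set (Matrix (Fin 2) (Fin 2) ℝ)ˣ),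
          ∃ h : ((M : Matrix (Fin 2) (Fin 2) ℝ)).mulVec v ≠ 0,
            p = Projectivization.mk ℝ (((M : Matrix (Fin 2) (Fin 2) ℝ)).mulVec v) h} :=
  projective_orbit_infinite_of_hyperbolic_and_scattering_general g s hgdet lam₁ lam₂ hne h₁ v₁ v₂
    hv₁ hv₂ heig₁ heig₂ hs₁₁ hs₁₂ hs₂₁ hs₂₂
end

section
/- The Dirac operator on L²((0,L), ℂ²) acting as ψ ↦ J ψ' with J = [[0,-1],[1,0]], with domain {ψ ∈ H¹((0,L),ℂ²) : ψ₁(0) = ψ₁(L) = 0}, has spectrum consisting exactly of the simple eigenvalues E_k = kπ/L for k ∈ ℤ, with normalized eigenfunctions (1/√L)(sin(E_k x), cos(E_k x))ᵗ. -/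
/-!
In components `Jψ' = Eψ` reads `ψ₁' = Eψ₂`, `ψ₂' = -Eψ₁`, so rotating `ψ(x)` back by the
angle `Ex` gives a constant vector. Hence `ψ₁(0) = 0` forces `ψ = ψ₂(0) (sin Ex, cos Ex)ᵗ`,
and the boundary condition at `L` becomes `sin (EL) = 0`, i.e. `EL ∈ πℤ`.
-/

open Real Matrix

abbrev diracJ : Matrix (Fin 2) (Fin 2) ℂ := !![0, -1; 1, 0]

lemma diracJ_mulVec (v : Fin 2 → ℂ) : diracJ *ᵥ v = ![-v 1, v 0] := by
  ext i; fin_cases i <;> simp [Matrix.mulVec, dotProduct]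

lemma hasDerivAt_ofReal_sin_mul (E x : ℝ) :
    HasDerivAt (fun x : ℝ => (sin (E * x) : ℂ)) (E * cos (E * x)) x := by
  simpa [mul_comm] using (((hasDerivAt_id x).const_mul E).sin).ofReal_comp

lemma hasDerivAt_ofReal_cos_mul (E x : ℝ) :
    HasDerivAt (fun x : ℝ => (cos (E * x) : ℂ)) (-(E * sin (E * x))) x := by
  simpa [mul_comm] using (((hasDerivAt_id x).const_mul E).cos).ofReal_comp

lemma eq_apply_zero_of_hasDerivAt_zero {G : Type*} [NormedAddCommGroup G] [NormedSpace ℝ G]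
    {f : ℝ → G} (hf : ∀ x, HasDerivAt f 0 x) (x : ℝ) :
    f x = f 0 :=
  is_const_of_deriv_eq_zero (fun y => (hf y).differentiableAt) (fun y => (hf y).deriv) x 0

section HarmonicSystem

variable {E : ℝ} {f g : ℝ → ℂ}

lemma rotation_invariants (hf : ∀ x, HasDerivAt f (E * g x) x)
    (hg : ∀ x, HasDerivAt g (-(E * f x)) x) (x : ℝ) :
    f x * cos (E * x) - g x * sin (E * x) = f 0 ∧
      f x * sin (E * x) + g x * cos (E * x) = g 0 := by
  have hu := eq_apply_zero_of_hasDerivAt_zero (fun y =>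
    (((hf y).mul (hasDerivAt_ofReal_cos_mul E y)).sub
      ((hg y).mul (hasDerivAt_ofReal_sin_mul E y))).congr_deriv (by ring)) x
  have hv := eq_apply_zero_of_hasDerivAt_zero (fun y =>
    (((hf y).mul (hasDerivAt_ofReal_sin_mul E y)).add
      ((hg y).mul (hasDerivAt_ofReal_cos_mul E y))).congr_deriv (by ring)) x
  exact ⟨by simpa using hu, by simpa using hv⟩

lemma eq_of_hasDerivAt_harmonic (hf : ∀ x, HasDerivAt f (E * g x) x)
    (hg : ∀ x, HasDerivAt g (-(E * f x)) x) (x : ℝ) :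
    f x = f 0 * cos (E * x) + g 0 * sin (E * x) ∧
      g x = g 0 * cos (E * x) - f 0 * sin (E * x) := by
  obtain ⟨hu, hv⟩ := rotation_invariants hf hg x
  have hcs : (cos (E * x) : ℂ) ^ 2 + (sin (E * x) : ℂ) ^ 2 = 1 := by
    exact_mod_cast cos_sq_add_sin_sq (E * x)
  constructor
  · linear_combination (cos (E * x) : ℂ) * hu + (sin (E * x) : ℂ) * hv - f x * hcs
  · linear_combination (cos (E * x) : ℂ) * hv - (sin (E * x) : ℂ) * hu - g x * hcs

end HarmonicSystem

noncomputable def diracMode (E x : ℝ) : Fin 2 → ℂ := ![(sin (E * x) : ℂ), (cos (E * x) : ℂ)]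

lemma hasDerivAt_diracMode (E x : ℝ) :
    HasDerivAt (diracMode E) ![(E : ℂ) * cos (E * x), -((E : ℂ) * sin (E * x))] x := by
  refine hasDerivAt_pi.mpr fun i => ?_
  fin_cases i
  exacts [hasDerivAt_ofReal_sin_mul E x, hasDerivAt_ofReal_cos_mul E x]

lemma diracJ_mulVec_deriv_diracMode (E x : ℝ) :
    diracJ *ᵥ ![(E : ℂ) * cos (E * x), -((E : ℂ) * sin (E * x))] = (E : ℂ) • diracMode E x := by
  ext i; fin_cases i <;> simp [diracMode]

lemma eq_smul_diracMode {E : ℝ} {ψ ψd : ℝ → Fin 2 → ℂ} (hψ : ∀ x, HasDerivAt ψ (ψd x) x)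
    (hode : ∀ x, diracJ *ᵥ ψd x = (E : ℂ) • ψ x) (h0 : ψ 0 0 = 0) (x : ℝ) :
    ψ x = ψ 0 1 • diracMode E x := by
  have hode' (x : ℝ) : ψd x 0 = E * ψ x 1 ∧ ψd x 1 = -(E * ψ x 0) := by
    have h := hode x
    rw [diracJ_mulVec] at h
    constructor
    · simpa using congrFun h 1
    · simpa [neg_eq_iff_eq_neg] using congrFun h 0
  obtain ⟨h₁, h₂⟩ := eq_of_hasDerivAt_harmonic (f := fun x => ψ x 0) (g := fun x => ψ x 1)
    (fun x => (hode' x).1 ▸ hasDerivAt_pi.mp (hψ x) 0)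
    (fun x => (hode' x).2 ▸ hasDerivAt_pi.mp (hψ x) 1) x
  ext i; fin_cases i <;> simp_all [diracMode, mul_comm]

lemma sin_mul_eq_zero_iff {E L : ℝ} (hL : L ≠ 0) : sin (E * L) = 0 ↔ ∃ k : ℤ, E = k * π / L := by
  simp_rw [sin_eq_zero_iff, eq_div_iff hL, eq_comm]

lemma exists_dirichlet_eigenfunction_iff {L : ℝ} (hL : 0 < L) (E : ℝ) :
    (∃ ψ ψd : ℝ → Fin 2 → ℂ, (∀ x, HasDerivAt ψ (ψd x) x) ∧
        (∀ x, diracJ *ᵥ ψd x = (E : ℂ) • ψ x) ∧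
        ψ 0 0 = 0 ∧ ψ L 0 = 0 ∧ ∃ x ∈ Set.Icc 0 L, ψ x ≠ 0) ↔
      ∃ k : ℤ, E = k * π / L := by
  rw [← sin_mul_eq_zero_iff hL.ne']
  constructor
  · rintro ⟨ψ, ψd, hψ, hode, h0, hL0, x, -, hx⟩
    have hψ0 : ψ 0 1 ≠ 0 := fun h => hx (by simp [eq_smul_diracMode hψ hode h0 x, h])
    have hsin := congrFun (eq_smul_diracMode hψ hode h0 L) 0
    simp only [hL0, Pi.smul_apply, diracMode, Matrix.cons_val_zero, smul_eq_mul] at hsin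
    exact_mod_cast (mul_eq_zero.mp hsin.symm).resolve_left hψ0
  · intro hsin
    exact ⟨diracMode E, _, hasDerivAt_diracMode E, diracJ_mulVec_deriv_diracMode E,
      by simp [diracMode], by simp [diracMode, hsin], 0, ⟨le_rfl, hL.le⟩,
      fun h => by simpa [diracMode] using congrFun h 1⟩

lemma integral_inv_sqrt_mul_sin_cos_norm_sq {L : ℝ} (hL : 0 < L) (E : ℝ) :
    ∫ x in (0 : ℝ)..L, (‖(√L : ℂ)⁻¹ * (sin (E * x) : ℂ)‖ ^ 2 +
      ‖(√L : ℂ)⁻¹ * (cos (E * x) : ℂ)‖ ^ 2) = 1 := by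
  have h (x : ℝ) : ‖(√L : ℂ)⁻¹ * (sin (E * x) : ℂ)‖ ^ 2 +
      ‖(√L : ℂ)⁻¹ * (cos (E * x) : ℂ)‖ ^ 2 = L⁻¹ := by
    simp only [norm_mul, norm_inv, Complex.norm_real, Real.norm_eq_abs, mul_pow, inv_pow, sq_abs,
      sq_sqrt hL.le, ← mul_add, sin_sq_add_cos_sq, mul_one]
  simp_rw [h]
  simp [hL.ne']

/-- Eigenvalue problem for the free 1D Dirac operator `J d/dx` on `(0, L)` with
Dirichlet boundary conditions `ψ₁(0) = ψ₁(L) = 0`: the eigenvalues are exactly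
`E_k = kπ/L`, `k ∈ ℤ`; they are simple, with normalized eigenfunctions
`(1/√L)(sin(E_k x), cos(E_k x))ᵗ`. -/
theorem free_dirac_dirichlet_spectrum (L : ℝ) (hL : 0 < L) :
    -- the eigenvalues are exactly the kπ/L
    (∀ E : ℝ,
      ((∃ ψ ψd : ℝ → Fin 2 → ℂ,
          (∀ x, HasDerivAt ψ (ψd x) x) ∧
          (∀ x, (!![0, -1; 1, 0] : Matrix (Fin 2) (Fin 2) ℂ).mulVec (ψd x) = (E : ℂ) • ψ x) ∧
          ψ 0 0 = 0 ∧ ψ L 0 = 0 ∧ ∃ x ∈ Set.Icc 0 L, ψ x ≠ 0)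
        ↔ ∃ k : ℤ, E = k * π / L))
    ∧
    -- explicit normalized eigenfunctions
    (∀ k : ℤ,
      (∀ x : ℝ, HasDerivAt
          (fun x : ℝ => (((Real.sqrt L : ℂ))⁻¹ •
            ![(Real.sin ((k * π / L) * x) : ℂ), (Real.cos ((k * π / L) * x) : ℂ)]))
          (((Real.sqrt L : ℂ))⁻¹ •
            ![(((k * π / L) : ℝ) * Real.cos ((k * π / L) * x) : ℂ),
              (-(((k * π / L) : ℝ) * Real.sin ((k * π / L) * x)) : ℂ)]) x) ∧
      (∀ x : ℝ, (!![0, -1; 1, 0] : Matrix (Fin 2) (Fin 2) ℂ).mulVec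
            (((Real.sqrt L : ℂ))⁻¹ •
              ![(((k * π / L) : ℝ) * Real.cos ((k * π / L) * x) : ℂ),
                (-(((k * π / L) : ℝ) * Real.sin ((k * π / L) * x)) : ℂ)])
          = ((k * π / L : ℝ) : ℂ) •
              (((Real.sqrt L : ℂ))⁻¹ •
                ![(Real.sin ((k * π / L) * x) : ℂ), (Real.cos ((k * π / L) * x) : ℂ)])) ∧
      (∫ x in (0 : ℝ)..L,
          (‖(((Real.sqrt L : ℂ))⁻¹ * (Real.sin ((k * π / L) * x) : ℂ))‖ ^ 2 +
           ‖(((Real.sqrt L : ℂ))⁻¹ * (Real.cos ((k * π / L) * x) : ℂ))‖ ^ 2)) = 1)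
    ∧
    -- simplicity: every solution with the boundary condition is a multiple of it
    (∀ k : ℤ, ∀ ψ ψd : ℝ → Fin 2 → ℂ,
      (∀ x, HasDerivAt ψ (ψd x) x) →
      (∀ x, (!![0, -1; 1, 0] : Matrix (Fin 2) (Fin 2) ℂ).mulVec (ψd x)
          = ((k * π / L : ℝ) : ℂ) • ψ x) →
      ψ 0 0 = 0 →
      ∃ c : ℂ, ∀ x : ℝ, ψ x = c • (((Real.sqrt L : ℂ))⁻¹ •
        ![(Real.sin ((k * π / L) * x) : ℂ), (Real.cos ((k * π / L) * x) : ℂ)])) := by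
  have hsqrt : (√L : ℂ) ≠ 0 := Complex.ofReal_ne_zero.mpr (sqrt_pos.mpr hL).ne'
  refine ⟨exists_dirichlet_eigenfunction_iff hL, fun k => ⟨fun x => ?_, fun x => ?_,
    integral_inv_sqrt_mul_sin_cos_norm_sq hL _⟩, fun k ψ ψd hψ hode h0 => ?_⟩
  · exact (hasDerivAt_diracMode _ x).const_smul (√L : ℂ)⁻¹
  · rw [mulVec_smul, diracJ_mulVec_deriv_diracMode, smul_comm]
    rfl
  · refine ⟨ψ 0 1 * √L, fun x => ?_⟩
    rw [eq_smul_diracMode hψ hode h0 x, smul_smul, mul_inv_cancel_right₀ hsqrt]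
    rfl
end
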